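/- arXiv:2410.20832 — 2 statements merged into one kernel-verified Lean document; each statement's English description precedes it below -/
import Mathlib

section
/- Let d ≥ 2 be an integer and let A_d be the adjacency matrix of Γ_d on m = 3d−1 vertices. Then (A_d^{-1})ᵀ · ( (1/2)A_d − C(d,2)·J_m ) · A_d^{-1} = (W_m − J_m)/2, where C(d,2) = d(d−1)/2. -/
open Finset Matrix

/-!
Both `A_d` and `W_m` are circulant on `ℤ/(3d - 1)`: `A_d` is generated by the indicator of the
residues `t ≡ 1 (mod 3)`, `W_m` by the indicator of `{0, ±1}`. Among three cyclically consecutive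
residues exactly one is `≡ 1 (mod 3)`, except around `0`, where `3d - 2` and `1` both are; hence
`A W = I + J`. Multiplying by `J` and using `W J = 3J`, `J² = (3d - 1)J` gives `A J = J A = d J`,
so `A⁻¹ = W - J/d`, `A⁻¹ J A⁻¹ = J/d²`, and the conjugate equals
`A⁻¹/2 - C(d,2)/d² · J = (W - J)/2`.
-/

/-- The Andrásfai-type graph `Γ_d` on vertex set `Fin (3d - 1)`: `i` and `j` are
adjacent iff `j - i ≡ ±s (mod 3d - 1)` for some `s ∈ {1, 4, 7, …, 3⌈d/2⌉ - 2}`,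
i.e. `s = 3k + 1` with `0 ≤ k < ⌈d/2⌉`. -/
def Gamma (d : ℕ) : SimpleGraph (Fin (3 * d - 1)) where
  Adj i j := i ≠ j ∧ ∃ k : ℕ, k < (d + 1) / 2 ∧
    (((i : ℕ) + (3 * k + 1)) % (3 * d - 1) = (j : ℕ) ∨
     ((j : ℕ) + (3 * k + 1)) % (3 * d - 1) = (i : ℕ))
  symm := by
    constructor
    rintro i j ⟨hne, k, hk, h⟩
    exact ⟨hne.symm, k, hk, h.symm⟩
  loopless := by constructor; rintro i ⟨hne, -⟩; exact hne rfl

noncomputable instance (d : ℕ) : DecidableRel (Gamma d).Adj :=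
  fun _ _ => Classical.dec _

/-- The adjacency matrix of `Γ_d`, as a real matrix. -/
noncomputable def adjA (d : ℕ) : Matrix (Fin (3 * d - 1)) (Fin (3 * d - 1)) ℝ :=
  Matrix.of fun i j => if (Gamma d).Adj i j then 1 else 0

/-- The circulant 0-1 matrix `W_m` with `W_m(i,j) = 1` iff `i - j ≡ -1, 0, 1 (mod m)`. -/
def Wmat (m : ℕ) : Matrix (Fin m) (Fin m) ℝ :=
  Matrix.of fun i j =>
    if (i : ℕ) = (j : ℕ) ∨ ((i : ℕ) + 1) % m = (j : ℕ) ∨ ((j : ℕ) + 1) % m = (i : ℕ)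
    then 1 else 0

/-- The all-ones `m × m` matrix `J_m`. -/
def Jmat (m : ℕ) : Matrix (Fin m) (Fin m) ℝ :=
  Matrix.of fun _ _ => 1


section Circulant

variable {m : ℕ}

lemma Jmat_eq_circulant : Jmat m = circulant 1 := rfl

variable [NeZero m]

lemma circulant_mul_Jmat (v : Fin m → ℝ) : circulant v * Jmat m = (∑ t, v t) • Jmat m := by
  ext i j
  simp only [mul_apply, circulant_apply, Jmat, of_apply, mul_one, Matrix.smul_apply,
    smul_eq_mul]
  exact Fintype.sum_equiv (Equiv.subLeft i) _ _ fun _ => rfl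

lemma Jmat_mul_Jmat : Jmat m * Jmat m = (m : ℝ) • Jmat m := by
  have h := circulant_mul_Jmat (1 : Fin m → ℝ)
  rw [← Jmat_eq_circulant] at h
  simpa using h

lemma Wmat_eq_circulant (hm : 3 ≤ m) :
    Wmat m = circulant (Pi.single 0 1 + Pi.single 1 1 + Pi.single (-1) 1) := by
  have hone : ((1 : Fin m) : ℕ) = 1 := by rw [Fin.val_one', Nat.mod_eq_of_lt (by omega)]
  have hsucc : ∀ a b : Fin m, ((a : ℕ) + 1) % m = b ↔ b = a + 1 := fun a b => by
    rw [eq_comm, Fin.ext_iff, Fin.val_add, hone]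
  have h10 : (1 : Fin m) ≠ 0 := by rw [ne_eq, Fin.ext_iff, hone, Fin.val_zero]; omega
  have h1n : (1 : Fin m) ≠ -1 := by
    rw [ne_eq, Fin.ext_iff, Fin.val_neg, if_neg h10, hone]; omega
  ext i j
  have hW : Wmat m i j = if i - j = 0 ∨ i - j = -1 ∨ i - j = 1 then 1 else 0 := by
    have hneg : i - j = -1 ↔ j = i + 1 := by rw [← neg_sub, neg_inj, sub_eq_iff_eq_add']
    simp only [Wmat, of_apply, ← Fin.ext_iff, hsucc, hneg, sub_eq_iff_eq_add', add_zero]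
  rw [hW, circulant_apply]
  generalize i - j = δ
  by_cases h0 : δ = 0
  · simp [h0, h10, Ne.symm h10]
  by_cases h1 : δ = 1
  · simp [h1, h10, h1n]
  by_cases h2 : δ = -1
  · simp [h2, h1n.symm, neg_ne_zero.2 h10]
  simp [h0, h1, h2]

lemma circulant_mul_Wmat (hm : 3 ≤ m) (v : Fin m → ℝ) :
    circulant v * Wmat m = circulant fun t => v t + v (t - 1) + v (t + 1) := by
  rw [Wmat_eq_circulant hm, Fin.circulant_mul]
  congr 1
  ext t
  simp [mulVec_add, sub_neg_eq_add]

lemma Wmat_mul_Jmat (hm : 3 ≤ m) : Wmat m * Jmat m = (3 : ℝ) • Jmat m := by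
  rw [Wmat_eq_circulant hm, circulant_mul_Jmat]
  simp only [Pi.add_apply, sum_add_distrib, Finset.sum_pi_single']
  norm_num

end Circulant

def oneModThreeIndicator (m : ℕ) (t : Fin m) : ℝ := if (t : ℕ) % 3 = 1 then 1 else 0

lemma oneModThreeIndicator_add_shifts {m : ℕ} [NeZero m] (hm : m % 3 = 2) (t : Fin m) :
    oneModThreeIndicator m t + oneModThreeIndicator m (t - 1) + oneModThreeIndicator m (t + 1)
      = (Pi.single 0 1 + 1 : Fin m → ℝ) t := by
  have hone : ((1 : Fin m) : ℕ) = 1 := by rw [Fin.val_one', Nat.mod_eq_of_lt (by omega)]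
  have hpred : ((t - 1 : Fin m) : ℕ) = if (t : ℕ) = 0 then m - 1 else t - 1 := by
    split_ifs with h
    · rw [Fin.coe_sub_iff_lt.2 (by rw [Fin.lt_def, hone]; omega), hone]
      omega
    · rw [Fin.coe_sub_iff_le.2 (by rw [Fin.le_def, hone]; omega), hone]
  have hsucc : ((t + 1 : Fin m) : ℕ) = if (t : ℕ) + 1 = m then 0 else (t : ℕ) + 1 := by
    rw [Fin.val_add_eq_ite, hone]
    have := t.isLt
    split_ifs <;> omega
  have ht := t.isLt
  simp only [oneModThreeIndicator, hpred, hsucc, Pi.single_apply, Fin.ext_iff, Fin.val_zero,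
    Pi.add_apply, Pi.one_apply]
  split_ifs <;> first | omega | simp_all

lemma gamma_adj_iff (d : ℕ) (i j : Fin (3 * d - 1)) :
    (Gamma d).Adj i j ↔ ((i - j : Fin (3 * d - 1)) : ℕ) % 3 = 1 := by
  have hi := i.isLt
  have hj := j.isLt
  have hshift : ∀ {a b s : ℕ}, a < 3 * d - 1 → s < 3 * d - 1 →
      ((a + s) % (3 * d - 1) = b ↔
        b = if 3 * d - 1 ≤ a + s then a + s - (3 * d - 1) else a + s) :=
    fun ha hs => by rw [Nat.add_mod_eq_ite, Nat.mod_eq_of_lt ha, Nat.mod_eq_of_lt hs, eq_comm]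
  obtain ⟨t, ht⟩ : ∃ t, ((i - j : Fin (3 * d - 1)) : ℕ) = t := ⟨_, rfl⟩
  have hsub : t = if (j : ℕ) ≤ i then (i : ℕ) - j else 3 * d - 1 + i - j := by
    rw [← ht]
    split_ifs with h
    · exact Fin.coe_sub_iff_le.2 (Fin.le_def.2 h)
    · exact Fin.coe_sub_iff_lt.2 (Fin.lt_def.2 (by omega))
  rw [ht]
  simp only [Gamma, ne_eq, Fin.ext_iff]
  -- Since `3d - 1 ≡ 2 (mod 3)`, the shift `-(3k + 1)` is `3(d - 1 - k) + 1`, so the shifts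
  -- `±(3k + 1)`, `k < ⌈d/2⌉`, are exactly the nonzero residues `≡ 1 (mod 3)`.
  constructor
  · rintro ⟨hne, k, hk, h | h⟩
    · rw [hshift hi (by omega)] at h
      split_ifs at h hsub <;> omega
    · rw [hshift hj (by omega)] at h
      split_ifs at h hsub <;> omega
  · intro h
    refine ⟨by split_ifs at hsub <;> omega, ?_⟩
    by_cases hc : t < 3 * ((d + 1) / 2) - 1
    · refine ⟨(t - 1) / 3, by omega, Or.inr ?_⟩
      rw [hshift hj (by omega)]
      split_ifs at hsub ⊢ <;> omega
    · refine ⟨(3 * d - 1 - t - 1) / 3, by omega, Or.inl ?_⟩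
      rw [hshift hi (by omega)]
      split_ifs at hsub ⊢ <;> omega

lemma adjA_eq_circulant (d : ℕ) : adjA d = circulant (oneModThreeIndicator (3 * d - 1)) := by
  ext i j
  simp only [adjA, of_apply, circulant_apply, oneModThreeIndicator, gamma_adj_iff]

lemma adjA_transpose (d : ℕ) : (adjA d)ᵀ = adjA d :=
  (Gamma d).transpose_adjMatrix

lemma adjA_mul_Wmat {d : ℕ} (hd : 2 ≤ d) :
    adjA d * Wmat (3 * d - 1) = 1 + Jmat (3 * d - 1) := by
  have : NeZero (3 * d - 1) := ⟨by omega⟩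
  rw [adjA_eq_circulant, circulant_mul_Wmat (by omega), Jmat_eq_circulant,
    ← circulant_single_one, ← circulant_add]
  exact congrArg circulant (funext (oneModThreeIndicator_add_shifts (by omega)))

lemma adjA_mul_Jmat {d : ℕ} (hd : 2 ≤ d) :
    adjA d * Jmat (3 * d - 1) = (d : ℝ) • Jmat (3 * d - 1) := by
  have : NeZero (3 * d - 1) := ⟨by omega⟩
  have h := congrArg (· * Jmat (3 * d - 1)) (adjA_mul_Wmat hd)
  simp only [Matrix.mul_assoc, Wmat_mul_Jmat (by omega : 3 ≤ 3 * d - 1), Matrix.add_mul,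
    Matrix.one_mul, Jmat_mul_Jmat, mul_smul_comm] at h
  have hcast : ((3 * d - 1 : ℕ) : ℝ) = 3 * d - 1 := by
    rw [Nat.cast_sub (by omega)]; push_cast; ring
  rw [hcast] at h
  refine smul_right_injective _ (by norm_num : (3 : ℝ) ≠ 0) ?_
  change (3 : ℝ) • _ = (3 : ℝ) • _
  rw [h]
  module

lemma Jmat_mul_adjA {d : ℕ} (hd : 2 ≤ d) :
    Jmat (3 * d - 1) * adjA d = (d : ℝ) • Jmat (3 * d - 1) := by
  rw [adjA_eq_circulant, Jmat_eq_circulant, Fin.circulant_mul_comm, ← Jmat_eq_circulant,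
    ← adjA_eq_circulant, adjA_mul_Jmat hd]

lemma adjA_mul_Wmat_sub_smul_Jmat {d : ℕ} (hd : 2 ≤ d) :
    adjA d * (Wmat (3 * d - 1) - (d : ℝ)⁻¹ • Jmat (3 * d - 1)) = 1 := by
  rw [Matrix.mul_sub, Matrix.mul_smul, adjA_mul_Wmat hd, adjA_mul_Jmat hd, smul_smul,
    inv_mul_cancel₀ (by positivity), one_smul, add_sub_cancel_right]


lemma inv_mul_sub_smul_mul_inv {K n : Type*} [Field K] [Fintype n] [DecidableEq n]
    {A J : Matrix n n K} {d : K} (hd : d ≠ 0) (hA : IsUnit A.det) (hAJ : A * J = d • J)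
    (hJA : J * A = d • J) (a c : K) :
    A⁻¹ * (a • A - c • J) * A⁻¹ = a • A⁻¹ - (c / d ^ 2) • J := by
  have hinvJ : A⁻¹ * J = d⁻¹ • J := by
    rw [eq_inv_smul_iff₀ hd, ← Matrix.mul_smul, ← hAJ, nonsing_inv_mul_cancel_left _ _ hA]
  have hJinv : J * A⁻¹ = d⁻¹ • J := by
    rw [eq_inv_smul_iff₀ hd, ← Matrix.smul_mul, ← hJA, mul_nonsing_inv_cancel_right _ _ hA]
  rw [Matrix.mul_sub, Matrix.sub_mul, Matrix.mul_smul, Matrix.mul_smul, nonsing_inv_mul _ hA,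
    Matrix.smul_mul, Matrix.one_mul, hinvJ, Matrix.smul_mul, Matrix.smul_mul, hJinv]
  module

/-- For every `d ≥ 2`, with `m = 3d - 1`,
`(A_d⁻¹)ᵀ · ((1/2)A_d - C(d,2)·J_m) · A_d⁻¹ = (W_m - J_m)/2`. -/
theorem adjA_inv_conjugation (d : ℕ) (hd : 2 ≤ d) :
    ((adjA d)⁻¹)ᵀ *
        ((1 / 2 : ℝ) • adjA d - (Nat.choose d 2 : ℝ) • Jmat (3 * d - 1)) *
        (adjA d)⁻¹
      = (1 / 2 : ℝ) • (Wmat (3 * d - 1) - Jmat (3 * d - 1)) := by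
  have hd0 : (d : ℝ) ≠ 0 := by positivity
  have hright := adjA_mul_Wmat_sub_smul_Jmat hd
  rw [transpose_nonsing_inv, adjA_transpose,
    inv_mul_sub_smul_mul_inv hd0 (isUnit_det_of_right_inverse hright) (adjA_mul_Jmat hd)
      (Jmat_mul_adjA hd),
    inv_eq_right_inv hright, Nat.cast_choose_two]
  have hcoef : (d * (d - 1) / 2 / d ^ 2 : ℝ) = 1 / 2 - (1 / 2) * (d : ℝ)⁻¹ := by
    field_simp
  rw [hcoef]
  module
end

section
/- Let H be an F5-free 3-graph and let {v1, v2, v3} be an edge of H. Then for every vertex set W ⊆ V(H) \ {v1, v2, v3}: (i) the restricted links L_H(v1, W), L_H(v2, W), L_H(v3, W) are pairwise edge-disjoint; and (ii) if three edges e1, e2, e3 ∈ L_H(v1, W) ∪ L_H(v2, W) ∪ L_H(v3, W) form a triangle, then either all three lie in L_H(v_i, W) for some single i ∈ {1,2,3}, or each L_H(v_i, W) (i = 1, 2, 3) contains exactly one of e1, e2, e3. -/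
/-!
Both parts come from exhibiting a copy of `F₅ = {abc, abd, cde}`. A pair `ab ⊆ W` in the links
of two vertices `u ≠ w` of the edge `uwt` gives the copy `abu, abw, uwt`; so every pair of the
union of the three restricted links has a unique colour `vᵢ`. If the edges `xy, yz` of a
triangle have colour `u` and `xz` has colour `w ≠ u`, then `uyx, uyz, xzw` is a copy (here
`w ≠ y` because `y ∈ W`); so the three colours of a triangle are all equal or pairwise distinct.
-/

open Finset

section Defs

variable {V : Type*} [DecidableEq V]

/-- The degree of a vertex `v` in the 3-graph `H`: the number of edges containing `v`. -/
def degH (H : Finset (Finset V)) (v : V) : ℕ :=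
  (H.filter fun e => v ∈ e).card

/-- `H` contains a copy of the generalized triangle `F₅ = {abc, abd, cde}`. -/
def HasF5 (H : Finset (Finset V)) : Prop :=
  ∃ a b c d e : V,
    a ≠ b ∧ a ≠ c ∧ a ≠ d ∧ a ≠ e ∧ b ≠ c ∧ b ≠ d ∧ b ≠ e ∧ c ≠ d ∧ c ≠ e ∧ d ≠ e ∧
    ({a, b, c} : Finset V) ∈ H ∧ ({a, b, d} : Finset V) ∈ H ∧ ({c, d, e} : Finset V) ∈ H

/-- `H` contains a copy of `K₄³⁻ = {abc, abd, acd}`. -/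
def HasK43m (H : Finset (Finset V)) : Prop :=
  ∃ a b c d : V,
    a ≠ b ∧ a ≠ c ∧ a ≠ d ∧ b ≠ c ∧ b ≠ d ∧ c ≠ d ∧
    ({a, b, c} : Finset V) ∈ H ∧ ({a, b, d} : Finset V) ∈ H ∧ ({a, c, d} : Finset V) ∈ H

/-- `H` is 3-partite: the vertex set can be partitioned into three parts so that every
edge has at most one vertex in each part. -/
def Tripartite (H : Finset (Finset V)) : Prop :=
  ∃ P : V → Fin 3, ∀ e ∈ H, ∀ u ∈ e, ∀ v ∈ e, u ≠ v → P u ≠ P v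

/-- The shadow graph `∂H` of the 3-graph `H`: two distinct vertices are adjacent iff
they lie in a common edge of `H`. -/
def shadowG (H : Finset (Finset V)) : SimpleGraph V where
  Adj u v := u ≠ v ∧ ∃ e ∈ H, u ∈ e ∧ v ∈ e
  symm := by
    constructor
    rintro u v ⟨hne, e, he, hu, hv⟩
    exact ⟨hne.symm, e, he, hv, hu⟩
  loopless := by constructor; rintro u ⟨hne, -⟩; exact hne rfl

end Defs

section LinkDefs

variable {V : Type*} [DecidableEq V]

/-- The link of a vertex `v` in the 3-graph `H`: all pairs `e` with `e ∪ {v} ∈ H`. -/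
def link (H : Finset (Finset V)) (v : V) : Finset (Finset V) :=
  (H.filter fun e => v ∈ e).image fun e => e.erase v

/-- The pairs in the link of `v` that lie entirely inside `W`. -/
def linkIn (H : Finset (Finset V)) (v : V) (W : Finset V) : Finset (Finset V) :=
  (link H v).filter fun p => p ⊆ W

end LinkDefs

section

variable {α ι : Type*}

theorem insert_pair_comm [DecidableEq α] (u a b : α) :
    (insert u {a, b} : Finset α) = {a, b, u} := by
  rw [insert_comm, pair_comm u b]

theorem card_filter_eq_one_of_image_eq [DecidableEq ι] {s : Finset α} {t : Finset ι}
    {f : α → ι} (hst : s.card ≤ t.card) (hf : s.image f = t) {b : ι} (hb : b ∈ t) :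
    (s.filter (f · = b)).card = 1 := by
  have hinj : Set.InjOn f s := card_image_iff.1 (le_antisymm card_image_le (hf ▸ hst))
  obtain ⟨a, ha, rfl⟩ := mem_image.1 (hf ▸ hb)
  refine card_eq_one.2 ⟨a, ext fun x => ?_⟩
  simp only [mem_filter, mem_singleton]
  exact ⟨fun ⟨hx, hfx⟩ => hinj hx ha hfx, by rintro rfl; exact ⟨ha, rfl⟩⟩

theorem card_filter_mem_eq_one_of_card_image [DecidableEq α] [DecidableEq ι]
    {T : Finset α} {e : Finset ι} {L : ι → Finset α} {c : α → ι}
    (hc : ∀ X ∈ T, c X ∈ e ∧ ∀ v ∈ e, X ∈ L v ↔ c X = v) (hT : T.card ≤ e.card)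
    (himg : e.card ≤ (T.image c).card) : ∀ v ∈ e, (T.filter (· ∈ L v)).card = 1 := by
  intro v hv
  have hsub : T.image c ⊆ e := fun v hv => by
    obtain ⟨X, hX, rfl⟩ := mem_image.1 hv
    exact (hc X hX).1
  rw [filter_congr fun X hX => (hc X hX).2 v hv]
  exact card_filter_eq_one_of_image_eq hT (eq_of_subset_of_card_le hsub himg) hv

end

section

variable {V : Type*} [DecidableEq V] {H : Finset (Finset V)}

theorem mem_link {v : V} {p : Finset V} : p ∈ link H v ↔ v ∉ p ∧ insert v p ∈ H := by
  simp only [link, mem_image, mem_filter]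
  constructor
  · rintro ⟨e, ⟨he, hv⟩, rfl⟩
    exact ⟨notMem_erase v e, (insert_erase hv).symm ▸ he⟩
  · rintro ⟨hv, hp⟩
    exact ⟨insert v p, ⟨hp, mem_insert_self v p⟩, erase_insert hv⟩

theorem mem_linkIn {v : V} {W p : Finset V} :
    p ∈ linkIn H v W ↔ v ∉ p ∧ insert v p ∈ H ∧ p ⊆ W := by
  rw [linkIn, mem_filter, mem_link, and_assoc]

theorem eq_of_mem_linkIn_of_mem_linkIn (h3 : ∀ e ∈ H, e.card = 3) (hF5 : ¬ HasF5 H)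
    {e W p : Finset V} (he : e ∈ H) (hW : Disjoint W e) {u w : V} (hu : u ∈ e) (hw : w ∈ e)
    (hpu : p ∈ linkIn H u W) (hpw : p ∈ linkIn H w W) : u = w := by
  by_contra huw
  obtain ⟨hup, hpH, hpW⟩ := mem_linkIn.1 hpu
  obtain ⟨-, hpH', -⟩ := mem_linkIn.1 hpw
  obtain ⟨t, ht, htw⟩ := exists_mem_ne (by rw [card_erase_of_mem hu, h3 e he]; simp) w
  obtain ⟨htu, hte⟩ := mem_erase.1 ht
  have he' : e = {u, w, t} := (eq_of_subset_of_card_le (by simp [insert_subset_iff, *])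
    (by rw [h3 e he, card_eq_three.2 ⟨u, w, t, huw, htu.symm, htw.symm, rfl⟩])).symm
  obtain ⟨a, b, hab, rfl⟩ := card_eq_two.1 (by simpa [card_insert_of_notMem hup] using h3 _ hpH)
  have ha : a ∉ e := disjoint_left.1 hW (hpW (by simp))
  have hb : b ∉ e := disjoint_left.1 hW (hpW (by simp))
  simp only [he', mem_insert, mem_singleton, not_or] at ha hb
  obtain ⟨hau, haw, hat⟩ := ha
  obtain ⟨hbu, hbw, hbt⟩ := hb
  exact hF5 ⟨a, b, u, w, t, hab, hau, haw, hat, hbu, hbw, hbt, huw, htu.symm, htw.symm,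
    insert_pair_comm u a b ▸ hpH, insert_pair_comm w a b ▸ hpH', he' ▸ he⟩

theorem disjoint_linkIn_of_ne (h3 : ∀ e ∈ H, e.card = 3) (hF5 : ¬ HasF5 H)
    {e W : Finset V} (he : e ∈ H) (hW : Disjoint W e) {u w : V} (hu : u ∈ e) (hw : w ∈ e)
    (huw : u ≠ w) : Disjoint (linkIn H u W) (linkIn H w W) :=
  disjoint_left.2 fun _ hpu hpw =>
    huw (eq_of_mem_linkIn_of_mem_linkIn h3 hF5 he hW hu hw hpu hpw)

theorem eq_of_triangle_mem_linkIn (hF5 : ¬ HasF5 H) {W : Finset V} {u w x y z : V}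
    (hxy : x ≠ y) (hxz : x ≠ z) (hyz : y ≠ z) (hw : w ∉ W)
    (hxyu : {x, y} ∈ linkIn H u W) (hyzu : {y, z} ∈ linkIn H u W)
    (hxzw : {x, z} ∈ linkIn H w W) : u = w := by
  by_contra huw
  obtain ⟨hu₁, e₁, hW₁⟩ := mem_linkIn.1 hxyu
  obtain ⟨hu₂, e₂, -⟩ := mem_linkIn.1 hyzu
  obtain ⟨hw₃, e₃, -⟩ := mem_linkIn.1 hxzw
  simp only [mem_insert, mem_singleton, not_or] at hu₁ hu₂ hw₃
  have hyw : y ≠ w := fun h => hw (h ▸ hW₁ (by simp))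
  exact hF5 ⟨u, y, x, z, w, hu₁.2, hu₁.1, hu₂.2, huw, hxy.symm, hyz,
    hyw, hxz, fun h => hw₃.1 h.symm, fun h => hw₃.2 h.symm, pair_comm x y ▸ e₁, e₂,
    insert_pair_comm w x z ▸ e₃⟩

theorem triangle_in_linkIn_monochromatic_or_rainbow (hF5 : ¬ HasF5 H) {W : Finset V}
    {u v w x y z : V} (hxy : x ≠ y) (hxz : x ≠ z) (hyz : y ≠ z) (hu : u ∉ W) (hv : v ∉ W)
    (hw : w ∉ W) (hxyu : {x, y} ∈ linkIn H u W) (hyzv : {y, z} ∈ linkIn H v W)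
    (hxzw : {x, z} ∈ linkIn H w W) : (u = v ∧ u = w) ∨ (u ≠ v ∧ u ≠ w ∧ v ≠ w) := by
  have huv : u = v → u = w := fun h =>
    eq_of_triangle_mem_linkIn hF5 hxy hxz hyz hw hxyu (h ▸ hyzv) hxzw
  have huw : u = w → u = v := fun h =>
    eq_of_triangle_mem_linkIn hF5 hxy.symm hyz hxz hv (pair_comm x y ▸ hxyu) (h ▸ hxzw) hyzv
  have hvw : v = w → w = u := fun h =>
    eq_of_triangle_mem_linkIn hF5 hxz hxy hyz.symm hu hxzw (pair_comm y z ▸ h ▸ hyzv) hxyu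
  tauto

theorem exists_linkIn_coloring (h3 : ∀ e ∈ H, e.card = 3) (hF5 : ¬ HasF5 H)
    {e W : Finset V} (he : e ∈ H) (hW : Disjoint W e) {T : Finset (Finset V)}
    (hT : ∀ X ∈ T, ∃ v ∈ e, X ∈ linkIn H v W) :
    ∃ c : Finset V → V, ∀ X ∈ T, c X ∈ e ∧ ∀ v ∈ e, X ∈ linkIn H v W ↔ c X = v := by
  have : Nonempty V := ⟨(card_pos.1 (by rw [h3 e he]; norm_num)).choose⟩
  choose! c hce hcL using hT
  exact ⟨c, fun X hX => ⟨hce X hX, fun v hv =>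
    ⟨fun h => eq_of_mem_linkIn_of_mem_linkIn h3 hF5 he hW (hce X hX) hv (hcL X hX) h,
      fun h => h ▸ hcL X hX⟩⟩⟩

end

theorem F5_free_restricted_links_general (V : Type*) [DecidableEq V]
    (H : Finset (Finset V)) (h3 : ∀ e ∈ H, e.card = 3) (hF5 : ¬ HasF5 H)
    (v₁ v₂ v₃ : V) (hedge : ({v₁, v₂, v₃} : Finset V) ∈ H)
    (W : Finset V) (hW : Disjoint W ({v₁, v₂, v₃} : Finset V)) :
    (Disjoint (linkIn H v₁ W) (linkIn H v₂ W) ∧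
     Disjoint (linkIn H v₁ W) (linkIn H v₃ W) ∧
     Disjoint (linkIn H v₂ W) (linkIn H v₃ W)) ∧
    (∀ x y z : V, x ≠ y → x ≠ z → y ≠ z →
      ({x, y} : Finset V) ∈ linkIn H v₁ W ∪ linkIn H v₂ W ∪ linkIn H v₃ W →
      ({y, z} : Finset V) ∈ linkIn H v₁ W ∪ linkIn H v₂ W ∪ linkIn H v₃ W →
      ({x, z} : Finset V) ∈ linkIn H v₁ W ∪ linkIn H v₂ W ∪ linkIn H v₃ W →
      ((({x, y} : Finset V) ∈ linkIn H v₁ W ∧ ({y, z} : Finset V) ∈ linkIn H v₁ W ∧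
          ({x, z} : Finset V) ∈ linkIn H v₁ W) ∨
       (({x, y} : Finset V) ∈ linkIn H v₂ W ∧ ({y, z} : Finset V) ∈ linkIn H v₂ W ∧
          ({x, z} : Finset V) ∈ linkIn H v₂ W) ∨
       (({x, y} : Finset V) ∈ linkIn H v₃ W ∧ ({y, z} : Finset V) ∈ linkIn H v₃ W ∧
          ({x, z} : Finset V) ∈ linkIn H v₃ W)) ∨
      ((({({x, y} : Finset V), {y, z}, {x, z}} : Finset (Finset V)).filter
            (· ∈ linkIn H v₁ W)).card = 1 ∧
       (({({x, y} : Finset V), {y, z}, {x, z}} : Finset (Finset V)).filter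
            (· ∈ linkIn H v₂ W)).card = 1 ∧
       (({({x, y} : Finset V), {y, z}, {x, z}} : Finset (Finset V)).filter
            (· ∈ linkIn H v₃ W)).card = 1)) := by
  set e : Finset V := {v₁, v₂, v₃}
  obtain ⟨h12, h13, h23⟩ : v₁ ≠ v₂ ∧ v₁ ≠ v₃ ∧ v₂ ≠ v₃ := by grind [h3 e hedge, card_le_two]
  obtain ⟨hv₁, hv₂, hv₃⟩ : v₁ ∈ e ∧ v₂ ∈ e ∧ v₃ ∈ e := by simp [e]
  have hdisj {u w : V} := disjoint_linkIn_of_ne h3 hF5 hedge hW (u := u) (w := w)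
  refine ⟨⟨hdisj hv₁ hv₂ h12, hdisj hv₁ hv₃ h13, hdisj hv₂ hv₃ h23⟩,
    fun x y z hxy hxz hyz hxy₀ hyz₀ hxz₀ => ?_⟩
  set T : Finset (Finset V) := {{x, y}, {y, z}, {x, z}}
  obtain ⟨c, hc⟩ := exists_linkIn_coloring h3 hF5 hedge hW (T := T) (by
    simp only [mem_union, or_assoc] at hxy₀ hyz₀ hxz₀
    simpa [T, e] using ⟨hxy₀, hyz₀, hxz₀⟩)
  have hmem : ∀ X ∈ T, X ∈ linkIn H (c X) W := fun X hX => ((hc X hX).2 _ (hc X hX).1).2 rfl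
  have hout : ∀ X ∈ T, c X ∉ W := fun X hX h => disjoint_left.1 hW h (hc X hX).1
  obtain ⟨hxyT, hyzT, hxzT⟩ : {x, y} ∈ T ∧ {y, z} ∈ T ∧ {x, z} ∈ T := by simp [T]
  rcases triangle_in_linkIn_monochromatic_or_rainbow hF5 hxy hxz hyz (hout _ hxyT) (hout _ hyzT)
      (hout _ hxzT) (hmem _ hxyT) (hmem _ hyzT) (hmem _ hxzT)
    with ⟨hyz_c, hxz_c⟩ | ⟨hne₁, hne₂, hne₃⟩
  · left
    have h₁ := hmem _ hxyT
    have h₂ := hyz_c ▸ hmem _ hyzT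
    have h₃ := hxz_c ▸ hmem _ hxzT
    have hv := (hc _ hxyT).1
    simp only [e, mem_insert, mem_singleton] at hv
    rcases hv with h | h | h <;> rw [h] at h₁ h₂ h₃ <;>
      simp only [h₁, h₂, h₃, and_self, true_or, or_true]
  · right
    have himg : e.card ≤ (T.image c).card := by
      simp only [T, image_insert, image_singleton, h3 e hedge]
      rw [card_eq_three.2 ⟨_, _, _, hne₁, hne₂, hne₃, rfl⟩]
    have key := card_filter_mem_eq_one_of_card_image hc
      (by rw [h3 e hedge]; exact card_le_three) himg
    exact ⟨key _ hv₁, key _ hv₂, key _ hv₃⟩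

/-- Let `H` be an `F₅`-free 3-graph, `{v₁, v₂, v₃}` an edge of `H`, and
`W ⊆ V(H) \ {v₁, v₂, v₃}`.  Then
(i) `L_H(v₁, W)`, `L_H(v₂, W)`, `L_H(v₃, W)` are pairwise edge-disjoint, and
(ii) if three edges of `L_H(v₁, W) ∪ L_H(v₂, W) ∪ L_H(v₃, W)` form a triangle, then
either all three lie in one `L_H(vᵢ, W)`, or each `L_H(vᵢ, W)` contains exactly one
of them. -/
theorem F5_free_restricted_links (V : Type*) [Fintype V] [DecidableEq V]
    (H : Finset (Finset V)) (h3 : ∀ e ∈ H, e.card = 3) (hF5 : ¬ HasF5 H)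
    (v₁ v₂ v₃ : V) (hedge : ({v₁, v₂, v₃} : Finset V) ∈ H)
    (W : Finset V) (hW : Disjoint W ({v₁, v₂, v₃} : Finset V)) :
    (Disjoint (linkIn H v₁ W) (linkIn H v₂ W) ∧
     Disjoint (linkIn H v₁ W) (linkIn H v₃ W) ∧
     Disjoint (linkIn H v₂ W) (linkIn H v₃ W)) ∧
    (∀ x y z : V, x ≠ y → x ≠ z → y ≠ z →
      ({x, y} : Finset V) ∈ linkIn H v₁ W ∪ linkIn H v₂ W ∪ linkIn H v₃ W →
      ({y, z} : Finset V) ∈ linkIn H v₁ W ∪ linkIn H v₂ W ∪ linkIn H v₃ W →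
      ({x, z} : Finset V) ∈ linkIn H v₁ W ∪ linkIn H v₂ W ∪ linkIn H v₃ W →
      ((({x, y} : Finset V) ∈ linkIn H v₁ W ∧ ({y, z} : Finset V) ∈ linkIn H v₁ W ∧
          ({x, z} : Finset V) ∈ linkIn H v₁ W) ∨
       (({x, y} : Finset V) ∈ linkIn H v₂ W ∧ ({y, z} : Finset V) ∈ linkIn H v₂ W ∧
          ({x, z} : Finset V) ∈ linkIn H v₂ W) ∨
       (({x, y} : Finset V) ∈ linkIn H v₃ W ∧ ({y, z} : Finset V) ∈ linkIn H v₃ W ∧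
          ({x, z} : Finset V) ∈ linkIn H v₃ W)) ∨
      ((({({x, y} : Finset V), {y, z}, {x, z}} : Finset (Finset V)).filter
            (· ∈ linkIn H v₁ W)).card = 1 ∧
       (({({x, y} : Finset V), {y, z}, {x, z}} : Finset (Finset V)).filter
            (· ∈ linkIn H v₂ W)).card = 1 ∧
       (({({x, y} : Finset V), {y, z}, {x, z}} : Finset (Finset V)).filter
            (· ∈ linkIn H v₃ W)).card = 1)) :=
  F5_free_restricted_links_general V H h3 hF5 v₁ v₂ v₃ hedge W hW
end
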